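/- For a precise point sequence U = (u_1,…,u_n) in ℝ^d and a sequence of closed balls W = (w_1,…,w_m), the upper bound of the one-sided shortcut discrete Fréchet distance equals min over nondecreasing maps σ: {1,…,n} → {1,…,m} of max_i (d(u_i, c_{σ(i)}) + r_{σ(i)}), where c_j, r_j are center and radius of w_j. -/
import Mathlib


open Metric

noncomputable section

/-- Points in `ℝ^k`. -/
abbrev Pt (k : ℕ) := EuclideanSpace ℝ (Fin k)

/-- One step in the discrete Fréchet coupling: advance in `A`, in `B`, or both. -/
def dfStep {n m : ℕ} (p q : Fin (n+1) × Fin (m+1)) : Prop :=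
  ((q.1 : ℕ) = (p.1 : ℕ) + 1 ∧ q.2 = p.2) ∨
  (q.1 = p.1 ∧ (q.2 : ℕ) = (p.2 : ℕ) + 1) ∨
  ((q.1 : ℕ) = (p.1 : ℕ) + 1 ∧ (q.2 : ℕ) = (p.2 : ℕ) + 1)

/-- `(a_n, b_m)` is reachable from `(a_1, b_1)` in the graph `G_δ`. -/
def dfReach {k n m : ℕ} (a : Fin (n+1) → Pt k) (b : Fin (m+1) → Pt k) (δ : ℝ) : Prop :=
  dist (a 0) (b 0) ≤ δ ∧ dist (a (Fin.last n)) (b (Fin.last m)) ≤ δ ∧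
  Relation.ReflTransGen
    (fun p q => dfStep p q ∧ dist (a p.1) (b p.2) ≤ δ ∧ dist (a q.1) (b q.2) ≤ δ)
    (0, 0) (Fin.last n, Fin.last m)

/-- The discrete Fréchet distance. -/
def dF {k n m : ℕ} (a : Fin (n+1) → Pt k) (b : Fin (m+1) → Pt k) : ℝ :=
  sInf {δ : ℝ | 0 < δ ∧ dfReach a b δ}

/-- One-sided discrete Fréchet distance with shortcuts on side `B`:
the minimum of `dF A B'` over nonempty subsequences `B'` of `B`. -/
def Fc {k n m : ℕ} (a : Fin (n+1) → Pt k) (b : Fin (m+1) → Pt k) : ℝ :=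
  sInf {v : ℝ | ∃ (l : ℕ) (f : Fin (l+1) → Fin (m+1)), StrictMono f ∧ v = dF a (b ∘ f)}

lemma monotone_transversal (n m : ℕ) (A : ℕ → ℕ → Prop)
    (hblock : ∀ σ : ℕ → ℕ, Monotone σ → (∀ i, σ i ≤ m) → ∃ i, i ≤ n ∧ A i (σ i)) :
    ∃ t : ℕ → ℕ, Monotone t ∧ (∀ j, t j ≤ n) ∧ ∀ j, j ≤ m → A (t j) j := by
  classical
  -- greedy avoiding sequence
  let g : ℕ → ℕ := fun i => Nat.rec (sInf {j | m < j ∨ ¬ A 0 j})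
    (fun i' gi => sInf {j | gi ≤ j ∧ (m < j ∨ ¬ A (i'+1) j)}) i
  have hne0 : {j | m < j ∨ ¬ A 0 j}.Nonempty := ⟨m+1, Or.inl (Nat.lt_succ_self m)⟩
  have hneS : ∀ i', {j | g i' ≤ j ∧ (m < j ∨ ¬ A (i'+1) j)}.Nonempty :=
    fun i' => ⟨g i' + m + 1, by constructor <;> omega⟩
  have hg0 : g 0 ∈ {j | m < j ∨ ¬ A 0 j} := Nat.sInf_mem hne0
  have hgS : ∀ i', g (i'+1) ∈ {j | g i' ≤ j ∧ (m < j ∨ ¬ A (i'+1) j)} :=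
    fun i' => Nat.sInf_mem (hneS i')
  have hgmono : Monotone g := monotone_nat_of_le_succ (fun i => (hgS i).1)
  -- the greedy must fail at or before row n
  have hfail : ∃ i, i ≤ n ∧ m < g i := by
    by_contra hc
    push_neg at hc
    obtain ⟨i, hi, hA⟩ := hblock (fun i => g (min i n))
      (fun a b hab => hgmono (min_le_min hab le_rfl))
      (fun i => hc _ (min_le_right i n))
    rw [min_eq_left hi] at hA
    rcases Nat.eq_zero_or_pos i with h0 | hpos
    · subst h0; rcases hg0 with h | h
      · exact absurd h (not_lt.mpr (hc 0 (Nat.zero_le n)))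
      · exact h hA
    · obtain ⟨i', rfl⟩ := Nat.exists_eq_succ_of_ne_zero (Nat.pos_iff_ne_zero.mp hpos)
      rcases (hgS i').2 with h | h
      · exact absurd h (not_lt.mpr (hc _ hi))
      · exact h hA
  obtain ⟨istar, histar, hgstar⟩ := hfail
  -- the transversal
  let t : ℕ → ℕ := fun j => sInf {i | i = istar ∨ j < g i}
  have htne : ∀ j, {i | i = istar ∨ j < g i}.Nonempty := fun j => ⟨istar, Or.inl rfl⟩
  have htmem : ∀ j, t j ∈ {i | i = istar ∨ j < g i} := fun j => Nat.sInf_mem (htne j)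
  have htle : ∀ j, t j ≤ istar := fun j => Nat.sInf_le (Or.inl rfl)
  refine ⟨t, ?_, fun j => le_trans (htle j) histar, ?_⟩
  · intro j j' hjj'
    exact Nat.sInf_le (by
      rcases htmem j' with h | h
      · exact Or.inl h
      · exact Or.inr (lt_of_le_of_lt hjj' h))
  · intro j hj
    have hjg : j < g (t j) := by
      rcases htmem j with h | h
      · rw [h]; exact lt_of_le_of_lt hj hgstar
      · exact h
    rcases Nat.eq_zero_or_pos (t j) with h0 | hpos
    · rw [h0] at hjg ⊢
      have := Nat.notMem_of_lt_sInf hjg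
      simp only [Set.mem_setOf_eq, not_or, not_not] at this
      exact this.2
    · obtain ⟨i', hti'⟩ := Nat.exists_eq_succ_of_ne_zero (Nat.pos_iff_ne_zero.mp hpos)
      have hi'lt : i' < t j := by omega
      have hi'notmem := Nat.notMem_of_lt_sInf hi'lt
      simp only [Set.mem_setOf_eq, not_or, not_lt] at hi'notmem
      rw [hti'] at hjg ⊢
      have := Nat.notMem_of_lt_sInf hjg
      simp only [Set.mem_setOf_eq, not_and, not_or, not_not] at this
      exact (this hi'notmem.2).2

lemma exists_far {d : ℕ} (hd : 0 < d) (u c : Pt d) (r : ℝ) (hr : 0 ≤ r) :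
    ∃ b : Pt d, b ∈ closedBall c r ∧ dist u b = dist u c + r := by
  by_cases h : u = c
  · refine ⟨c + r • EuclideanSpace.single (⟨0, hd⟩ : Fin d) 1, ?_, ?_⟩
    · simp [mem_closedBall, dist_eq_norm, norm_smul, EuclideanSpace.norm_single,
        abs_of_nonneg hr]
    · subst h
      simp [dist_eq_norm, norm_smul, EuclideanSpace.norm_single, abs_of_nonneg hr]
  · set v : Pt d := c - u with hv
    have hv0 : v ≠ 0 := sub_ne_zero.mpr (fun hcu => h hcu.symm)
    have hnv : 0 < ‖v‖ := norm_pos_iff.mpr hv0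
    refine ⟨c + (r / ‖v‖) • v, ?_, ?_⟩
    · simp only [mem_closedBall, dist_eq_norm]
      have h2 : c + (r / ‖v‖) • v - c = (r / ‖v‖) • v := by abel
      rw [h2, norm_smul, Real.norm_eq_abs, abs_of_nonneg (by positivity)]
      rw [div_mul_cancel₀ _ (ne_of_gt hnv)]
    · have key : u - (c + (r / ‖v‖) • v) = -((1 + r / ‖v‖) • v) := by
        rw [add_smul, one_smul, hv]; abel
      rw [dist_eq_norm, key, norm_neg, norm_smul, Real.norm_eq_abs,
        abs_of_nonneg (by positivity), dist_eq_norm,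
        show u - c = -v by rw [hv]; abel, norm_neg]
      rw [add_mul, one_mul, div_mul_cancel₀ _ (ne_of_gt hnv)]

lemma fin_fix {k : ℕ} (h : Fin (k+1) → Fin (k+1)) (hm : Monotone h) : ∃ i, h i = i := by
  classical
  set s : Finset (Fin (k+1)) := Finset.univ.filter (fun i => h i ≤ i) with hs
  have hne : s.Nonempty := ⟨Fin.last k, by simp [hs, Fin.le_last]⟩
  refine ⟨s.min' hne, ?_⟩
  have h1 : h (s.min' hne) ≤ s.min' hne := by
    have h2 := s.min'_mem hne
    simp only [hs, Finset.mem_filter] at h2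
    exact h2.2
  rcases lt_or_eq_of_le h1 with hlt | heq
  · exfalso
    have h3 : h (s.min' hne) ∈ s := by
      simp only [hs, Finset.mem_filter, Finset.mem_univ, true_and]
      exact hm h1
    exact absurd (s.min'_le _ h3) (not_le.mpr hlt)
  · exact heq

lemma dfReach_all {k n m : ℕ} (a : Fin (n+1) → Pt k) (b : Fin (m+1) → Pt k) (δ : ℝ)
    (h : ∀ i j, dist (a i) (b j) ≤ δ) : dfReach a b δ := by
  refine ⟨h _ _, h _ _, ?_⟩
  have h1 : ∀ i : ℕ, ∀ hi : i < n + 1, Relation.ReflTransGen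
      (fun p q => dfStep p q ∧ dist (a p.1) (b p.2) ≤ δ ∧ dist (a q.1) (b q.2) ≤ δ)
      (0, 0) (⟨i, hi⟩, 0) := by
    intro i
    induction i with
    | zero => intro hi
              have : ((0 : Fin (n+1)), (0 : Fin (m+1))) = (⟨0, hi⟩, 0) := by
                simp [Prod.ext_iff, Fin.ext_iff]
              rw [← this]
    | succ i ih =>
        intro hi
        refine Relation.ReflTransGen.tail (ih (by omega)) ?_
        exact ⟨Or.inl ⟨rfl, rfl⟩, h _ _, h _ _⟩
  have h2 : ∀ j : ℕ, ∀ hj : j < m + 1, Relation.ReflTransGen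
      (fun p q => dfStep p q ∧ dist (a p.1) (b p.2) ≤ δ ∧ dist (a q.1) (b q.2) ≤ δ)
      (0, 0) (Fin.last n, ⟨j, hj⟩) := by
    intro j
    induction j with
    | zero => intro hj
              have : (Fin.last n, (0 : Fin (m+1))) = (Fin.last n, ⟨0, hj⟩) := by
                simp [Prod.ext_iff, Fin.ext_iff]
              rw [← this]; exact h1 n (Nat.lt_succ_self n)
    | succ j ih =>
        intro hj
        refine Relation.ReflTransGen.tail (ih (by omega)) ?_
        exact ⟨Or.inr (Or.inl ⟨rfl, rfl⟩), h _ _, h _ _⟩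
  exact h2 m (Nat.lt_succ_self m)

lemma reach_of_staircase {k n l : ℕ} (a : Fin (n+1) → Pt k) (b : Fin (l+1) → Pt k)
    (τ : Fin (n+1) → Fin (l+1)) (hmono : Monotone τ) (h0 : τ 0 = 0)
    (hlast : τ (Fin.last n) = Fin.last l)
    (hstep : ∀ i : ℕ, ∀ h : i < n,
      (τ ⟨i+1, by omega⟩ : ℕ) ≤ (τ ⟨i, by omega⟩ : ℕ) + 1)
    (δ : ℝ) (hδ : ∀ i, dist (a i) (b (τ i)) ≤ δ) : dfReach a b δ := by
  refine ⟨by have := hδ 0; rwa [h0] at this,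
    by have := hδ (Fin.last n); rwa [hlast] at this, ?_⟩
  have key : ∀ i : ℕ, ∀ hi : i < n + 1, Relation.ReflTransGen
      (fun p q => dfStep p q ∧ dist (a p.1) (b p.2) ≤ δ ∧ dist (a q.1) (b q.2) ≤ δ)
      (0, 0) (⟨i, hi⟩, τ ⟨i, hi⟩) := by
    intro i
    induction i with
    | zero => intro hi
              have e : ((0:Fin (n+1)), (0:Fin (l+1))) = (⟨0,hi⟩, τ ⟨0,hi⟩) := by
                have : (⟨0,hi⟩ : Fin (n+1)) = 0 := by simp [Fin.ext_iff]
                rw [this, h0]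
              rw [← e]
    | succ i ih =>
        intro hi
        have hi' : i < n + 1 := by omega
        have hm : (τ ⟨i, hi'⟩ : ℕ) ≤ (τ ⟨i+1, hi⟩ : ℕ) := hmono (by simp [Fin.le_def])
        have hs : (τ ⟨i+1, hi⟩ : ℕ) ≤ (τ ⟨i, hi'⟩ : ℕ) + 1 := hstep i (by omega)
        refine Relation.ReflTransGen.tail (ih hi') ⟨?_, hδ _, hδ _⟩
        rcases eq_or_lt_of_le hm with heq | hlt
        · exact Or.inl ⟨rfl, Fin.ext heq.symm⟩
        · have hv : (τ ⟨i+1, hi⟩ : ℕ) = (τ ⟨i, hi'⟩ : ℕ) + 1 := by omega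
          exact Or.inr (Or.inr ⟨rfl, hv⟩)
  have hkey := key n (Nat.lt_succ_self n)
  have e : ((⟨n, Nat.lt_succ_self n⟩ : Fin (n+1)), τ ⟨n, Nat.lt_succ_self n⟩)
      = (Fin.last n, Fin.last l) := by
    have h1 : (⟨n, Nat.lt_succ_self n⟩ : Fin (n+1)) = Fin.last n := rfl
    rw [h1, hlast]
  rwa [e] at hkey

lemma dfReach_extract {k n m : ℕ} (a : Fin (n+1) → Pt k) (b : Fin (m+1) → Pt k) (δ : ℝ)
    (h : dfReach a b δ) :
    ∃ σ : Fin (n+1) → Fin (m+1), Monotone σ ∧ ∀ i, dist (a i) (b (σ i)) ≤ δ := by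
  obtain ⟨h0, hlast, hpath⟩ := h
  suffices H : ∀ p : Fin (n+1) × Fin (m+1), Relation.ReflTransGen
      (fun p q => dfStep p q ∧ dist (a p.1) (b p.2) ≤ δ ∧ dist (a q.1) (b q.2) ≤ δ)
      (0, 0) p →
      ∃ σ : Fin (n+1) → Fin (m+1), Monotone σ ∧ (∀ i, i ≤ p.1 → dist (a i) (b (σ i)) ≤ δ)
        ∧ (∀ i, p.1 ≤ i → σ i = p.2) by
    obtain ⟨σ, hσm, hσd, _⟩ := H _ hpath
    exact ⟨σ, hσm, fun i => hσd i (Fin.le_last i)⟩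
  intro p hp
  induction hp with
  | refl =>
      refine ⟨fun _ => 0, monotone_const, ?_, fun _ _ => rfl⟩
      intro i hi
      have : i = 0 := le_antisymm hi (Fin.zero_le i)
      rwa [this]
  | @tail p' q hpq hR ih =>
      obtain ⟨σ, hσm, hσd, hσend⟩ := ih
      obtain ⟨hstep, hdp, hdq⟩ := hR
      rcases hstep with ⟨h1, h2⟩ | ⟨h1, h2⟩ | ⟨h1, h2⟩
      · -- advance A: q.1 = p'.1 + 1, q.2 = p'.2
        refine ⟨fun i => if i ≤ p'.1 then σ i else q.2, ?_, ?_, ?_⟩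
        · intro x y hxy
          by_cases hx : x ≤ p'.1 <;> by_cases hy : y ≤ p'.1 <;>
            simp only [hx, hy, if_true, if_false]
          · exact hσm hxy
          · calc σ x ≤ σ p'.1 := hσm hx
              _ = p'.2 := hσend _ le_rfl
              _ = q.2 := h2.symm
          · exact absurd (le_trans hxy hy) hx
          · exact le_rfl
        · intro i hi
          by_cases hip : i ≤ p'.1
          · simpa [hip] using hσd i hip
          · have : i = q.1 := by
              apply Fin.ext
              have := Fin.le_def.mp hi
              have := Fin.le_def.mp (not_le.mp hip).le
              omega
            simp only [hip, if_false]
            rwa [this]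
        · intro i hi
          have hip : ¬ i ≤ p'.1 := by
            intro hle
            have := Fin.le_def.mp hi
            have := Fin.le_def.mp hle
            omega
          simp [hip]
      · -- advance B: q.1 = p'.1, q.2 = p'.2 + 1
        refine ⟨fun i => if i < p'.1 then σ i else q.2, ?_, ?_, ?_⟩
        · intro x y hxy
          by_cases hx : x < p'.1 <;> by_cases hy : y < p'.1 <;>
            simp only [hx, hy, if_true, if_false]
          · exact hσm hxy
          · calc σ x ≤ σ p'.1 := hσm hx.le
              _ = p'.2 := hσend _ le_rfl
              _ ≤ q.2 := by rw [Fin.le_def]; omega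
          · exact absurd (lt_of_le_of_lt hxy hy) (not_lt.mpr (not_lt.mp hx))
          · exact le_rfl
        · intro i hi
          by_cases hip : i < p'.1
          · simpa [hip] using hσd i hip.le
          · have : i = q.1 := by
              apply Fin.ext
              have h3 := Fin.le_def.mp hi
              have h4 := Fin.le_def.mp (not_lt.mp hip)
              have h5 : (q.1 : ℕ) = (p'.1 : ℕ) := congrArg Fin.val h1
              omega
            simp only [hip, if_false]
            rwa [this]
        · intro i hi
          have hip : ¬ i < p'.1 := by
            rw [not_lt, ← h1]; exact hi
          simp [hip]
      · -- diagonal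
        refine ⟨fun i => if i ≤ p'.1 then σ i else q.2, ?_, ?_, ?_⟩
        · intro x y hxy
          by_cases hx : x ≤ p'.1 <;> by_cases hy : y ≤ p'.1 <;>
            simp only [hx, hy, if_true, if_false]
          · exact hσm hxy
          · calc σ x ≤ σ p'.1 := hσm hx
              _ = p'.2 := hσend _ le_rfl
              _ ≤ q.2 := by rw [Fin.le_def]; omega
          · exact absurd (le_trans hxy hy) hx
          · exact le_rfl
        · intro i hi
          by_cases hip : i ≤ p'.1
          · simpa [hip] using hσd i hip
          · have : i = q.1 := by
              apply Fin.ext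
              have := Fin.le_def.mp hi
              have h4 := Fin.lt_def.mp (not_le.mp hip)
              omega
            simp only [hip, if_false]
            rwa [this]
        · intro i hi
          have hip : ¬ i ≤ p'.1 := by
            intro hle
            have := Fin.le_def.mp hi
            have := Fin.le_def.mp hle
            omega
          simp [hip]

lemma mono_surj_zero {n l : ℕ} (τ : Fin (n+1) → Fin (l+1)) (hm : Monotone τ)
    (hs : Function.Surjective τ) : τ 0 = 0 := by
  obtain ⟨i, hi⟩ := hs 0
  exact le_antisymm (hi ▸ hm (Fin.zero_le i)) (Fin.zero_le _)

lemma mono_surj_last {n l : ℕ} (τ : Fin (n+1) → Fin (l+1)) (hm : Monotone τ)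
    (hs : Function.Surjective τ) : τ (Fin.last n) = Fin.last l := by
  obtain ⟨i, hi⟩ := hs (Fin.last l)
  exact le_antisymm (Fin.le_last _) (hi ▸ hm (Fin.le_last i))

lemma mono_surj_step {n l : ℕ} (τ : Fin (n+1) → Fin (l+1)) (hm : Monotone τ)
    (hs : Function.Surjective τ) : ∀ i : ℕ, ∀ h : i < n,
      (τ ⟨i+1, by omega⟩ : ℕ) ≤ (τ ⟨i, by omega⟩ : ℕ) + 1 := by
  intro i h
  by_contra hc
  push_neg at hc
  have hlt : (τ ⟨i, by omega⟩ : ℕ) + 1 < (τ ⟨i+1, by omega⟩ : ℕ) := hc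
  have hvlt : (τ ⟨i, by omega⟩ : ℕ) + 1 < l + 1 := by
    have := (τ ⟨i+1, by omega⟩).isLt; omega
  obtain ⟨i', hi'⟩ := hs ⟨(τ ⟨i, by omega⟩ : ℕ) + 1, hvlt⟩
  rcases le_or_gt i' ⟨i, by omega⟩ with hle | hgt
  · have h2 := Fin.le_def.mp (hm hle)
    have h3 : (τ i' : ℕ) = (τ ⟨i, by omega⟩ : ℕ) + 1 := congrArg Fin.val hi'
    omega
  · have hge : (⟨i+1, by omega⟩ : Fin (n+1)) ≤ i' := by
      rw [Fin.le_def]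
      have := Fin.lt_def.mp hgt
      simpa using this
    have h2 := Fin.le_def.mp (hm hge)
    have h3 : (τ i' : ℕ) = (τ ⟨i, by omega⟩ : ℕ) + 1 := congrArg Fin.val hi'
    omega

lemma dF_nonneg {k n m : ℕ} (a : Fin (n+1) → Pt k) (b : Fin (m+1) → Pt k) : 0 ≤ dF a b :=
  Real.sInf_nonneg (fun _ hx => hx.1.le)

/-- the upper bound `F₁^max(U,W)` of the one-sided shortcut discrete Fréchet
distance (supremum of `F_c(U,B)` over realizations `B` of the ball sequence `W`) equals the
minimum over nondecreasing maps `σ` of `max_i (d(u_i, c_{σ(i)}) + r_{σ(i)})`. -/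
theorem Fmax_eq_min_monotone_bottleneck {d n m : ℕ} (hd : 0 < d)
    (u : Fin (n+1) → Pt d) (c : Fin (m+1) → Pt d) (r : Fin (m+1) → ℝ)
    (hr : ∀ x, 0 ≤ r x) :
    sSup {v : ℝ | ∃ b : Fin (m+1) → Pt d,
        (∀ x, b x ∈ closedBall (c x) (r x)) ∧ v = Fc u b}
    = sInf {v : ℝ | ∃ σ : Fin (n+1) → Fin (m+1), Monotone σ ∧
        v = ⨆ i : Fin (n+1), (dist (u i) (c (σ i)) + r (σ i))} := by
  classical
  set S₂ : Set ℝ := {v : ℝ | ∃ σ : Fin (n+1) → Fin (m+1), Monotone σ ∧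
      v = ⨆ i : Fin (n+1), (dist (u i) (c (σ i)) + r (σ i))} with hS₂def
  set S₁ : Set ℝ := {v : ℝ | ∃ b : Fin (m+1) → Pt d,
      (∀ x, b x ∈ closedBall (c x) (r x)) ∧ v = Fc u b} with hS₁def
  have hS₂ne : S₂.Nonempty := ⟨_, fun _ => 0, monotone_const, rfl⟩
  have hS₂fin : S₂.Finite := by
    have hsub : S₂ ⊆ (fun σ : Fin (n+1) → Fin (m+1) =>
        ⨆ i : Fin (n+1), (dist (u i) (c (σ i)) + r (σ i))) '' Set.univ := by
      rintro v ⟨σ, hσ, rfl⟩; exact ⟨σ, trivial, rfl⟩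
    exact (Set.finite_univ.image _).subset hsub
  set M : ℝ := sInf S₂ with hMdef
  obtain ⟨σs, hσs, hMs⟩ : M ∈ S₂ := hS₂ne.csInf_mem hS₂fin
  have hlesup : ∀ (f : Fin (n+1) → ℝ) (i : Fin (n+1)), f i ≤ ⨆ i, f i :=
    fun f i => le_ciSup (Set.finite_range f).bddAbove i
  have hM0 : 0 ≤ M := by
    rw [hMs]
    exact le_trans (by have := dist_nonneg (x := u 0) (y := c (σs 0)); have := hr (σs 0); linarith)
      (hlesup _ 0)
  -- upper bound: every realization has Fc ≤ M
  have upper : ∀ b : Fin (m+1) → Pt d, (∀ x, b x ∈ closedBall (c x) (r x)) → Fc u b ≤ M := by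
    intro b hb
    set s : Finset (Fin (m+1)) := Finset.image σs Finset.univ with hsdef
    have hsne : s.Nonempty := ⟨σs 0, Finset.mem_image_of_mem _ (Finset.mem_univ 0)⟩
    obtain ⟨l, hl⟩ : ∃ l, s.card = l + 1 :=
      ⟨s.card - 1, (Nat.succ_pred_eq_of_pos hsne.card_pos).symm⟩
    set e := s.orderIsoOfFin hl with hedef
    set f : Fin (l+1) → Fin (m+1) := fun j => (e j : Fin (m+1)) with hfdef
    have hf : StrictMono f := fun x y hxy => Subtype.coe_lt_coe.mpr (e.strictMono hxy)
    have hmem : ∀ i, σs i ∈ s := fun i => Finset.mem_image_of_mem _ (Finset.mem_univ i)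
    set τ : Fin (n+1) → Fin (l+1) := fun i => e.symm ⟨σs i, hmem i⟩ with hτdef
    have hfτ : ∀ i, f (τ i) = σs i := by
      intro i
      show ((e (e.symm ⟨σs i, hmem i⟩) : {x // x ∈ s}) : Fin (m+1)) = σs i
      rw [e.apply_symm_apply]
    have hτmono : Monotone τ := fun x y hxy =>
      e.symm.monotone (Subtype.mk_le_mk.mpr (hσs hxy))
    have hτsurj : Function.Surjective τ := by
      intro j
      have hj : (e j : Fin (m+1)) ∈ s := (e j).2
      obtain ⟨i, -, hi⟩ := Finset.mem_image.mp hj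
      refine ⟨i, ?_⟩
      have hsub : (⟨σs i, hmem i⟩ : {x // x ∈ s}) = e j := Subtype.ext hi
      show e.symm ⟨σs i, hmem i⟩ = j
      rw [hsub, e.symm_apply_apply]
    have hτ0 : τ 0 = 0 := mono_surj_zero τ hτmono hτsurj
    have hτlast : τ (Fin.last n) = Fin.last l := mono_surj_last τ hτmono hτsurj
    have hτstep : ∀ i : ℕ, ∀ h : i < n,
        (τ ⟨i+1, by omega⟩ : ℕ) ≤ (τ ⟨i, by omega⟩ : ℕ) + 1 :=
      mono_surj_step τ hτmono hτsurj
    -- dF u (b ∘ f) ≤ M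
    have hcd : ∀ i, dist (u i) ((b ∘ f) (τ i)) ≤ M := by
      intro i
      have h1 : dist (u i) (b (σs i)) ≤ dist (u i) (c (σs i)) + r (σs i) := by
        have hbmem := hb (σs i)
        rw [mem_closedBall, dist_comm] at hbmem
        calc dist (u i) (b (σs i)) ≤ dist (u i) (c (σs i)) + dist (c (σs i)) (b (σs i)) :=
              dist_triangle _ _ _
          _ ≤ dist (u i) (c (σs i)) + r (σs i) := by linarith
      calc dist (u i) ((b ∘ f) (τ i)) = dist (u i) (b (σs i)) := by rw [Function.comp_apply, hfτ]
        _ ≤ dist (u i) (c (σs i)) + r (σs i) := h1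
        _ ≤ ⨆ i : Fin (n+1), (dist (u i) (c (σs i)) + r (σs i)) :=
              hlesup (fun i => dist (u i) (c (σs i)) + r (σs i)) i
        _ = M := hMs.symm
    have hdF : dF u (b ∘ f) ≤ M := by
      have hreach : ∀ δ : ℝ, M < δ → δ ∈ {δ : ℝ | 0 < δ ∧ dfReach u (b ∘ f) δ} := by
        intro δ hδ
        exact ⟨lt_of_le_of_lt hM0 hδ,
          reach_of_staircase u (b ∘ f) τ hτmono hτ0 hτlast hτstep δ
            (fun i => le_trans (hcd i) hδ.le)⟩
      have hbdd : BddBelow {δ : ℝ | 0 < δ ∧ dfReach u (b ∘ f) δ} :=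
        ⟨0, fun x hx => hx.1.le⟩
      refine le_of_forall_gt_imp_ge_of_dense ?_
      intro δ hδ
      exact csInf_le hbdd (hreach δ hδ)
    have hFcmem : dF u (b ∘ f) ∈ {v : ℝ | ∃ (l : ℕ) (g : Fin (l+1) → Fin (m+1)),
        StrictMono g ∧ v = dF u (b ∘ g)} := ⟨l, f, hf, rfl⟩
    have hFcbdd : BddBelow {v : ℝ | ∃ (l : ℕ) (g : Fin (l+1) → Fin (m+1)),
        StrictMono g ∧ v = dF u (b ∘ g)} := by
      refine ⟨0, ?_⟩
      rintro v ⟨l', g, hg, rfl⟩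
      exact dF_nonneg _ _
    exact le_trans (csInf_le hFcbdd hFcmem) hdF
  -- adversary realization
  have adversary : ∃ bs : Fin (m+1) → Pt d,
      (∀ x, bs x ∈ closedBall (c x) (r x)) ∧ M ≤ Fc u bs := by
    set A : ℕ → ℕ → Prop := fun i j => ∀ (hi : i < n+1) (hj : j < m+1),
      M ≤ dist (u ⟨i, hi⟩) (c ⟨j, hj⟩) + r ⟨j, hj⟩ with hAdef
    have hblock : ∀ σ : ℕ → ℕ, Monotone σ → (∀ i, σ i ≤ m) → ∃ i, i ≤ n ∧ A i (σ i) := by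
      intro σ hσ hσb
      set σ' : Fin (n+1) → Fin (m+1) := fun i => ⟨σ i.val, Nat.lt_succ_of_le (hσb i.val)⟩
        with hσ'def
      have hσ'mono : Monotone σ' := fun x y hxy => by
        simp only [hσ'def, Fin.mk_le_mk]
        exact hσ (Fin.le_def.mp hxy)
      have hvmem : (⨆ i : Fin (n+1), (dist (u i) (c (σ' i)) + r (σ' i))) ∈ S₂ :=
        ⟨σ', hσ'mono, rfl⟩
      have hMle : M ≤ ⨆ i : Fin (n+1), (dist (u i) (c (σ' i)) + r (σ' i)) :=
        csInf_le hS₂fin.bddBelow hvmem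
      obtain ⟨i₀, hi₀⟩ := Finite.exists_max (fun i : Fin (n+1) =>
        dist (u i) (c (σ' i)) + r (σ' i))
      have hM1 : M ≤ dist (u i₀) (c (σ' i₀)) + r (σ' i₀) :=
        le_trans hMle (ciSup_le hi₀)
      exact ⟨i₀.val, Nat.lt_succ_iff.mp i₀.isLt, fun hi hj => hM1⟩
    obtain ⟨t, htmono, htle, htA⟩ := monotone_transversal n m A hblock
    set tF : Fin (m+1) → Fin (n+1) := fun j => ⟨t j.val, Nat.lt_succ_of_le (htle j.val)⟩
      with htFdef
    have htFmono : Monotone tF := fun x y hxy => by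
      simp only [htFdef, Fin.mk_le_mk]
      exact htmono (Fin.le_def.mp hxy)
    have hA' : ∀ j : Fin (m+1), M ≤ dist (u (tF j)) (c j) + r j := by
      intro j
      have := htA j.val (Nat.lt_succ_iff.mp j.isLt) (Nat.lt_succ_of_le (htle j.val)) j.isLt
      exact this
    choose bs hbs1 hbs2 using fun j : Fin (m+1) =>
      exists_far hd (u (tF j)) (c j) (r j) (hr j)
    refine ⟨bs, hbs1, ?_⟩
    have hfar : ∀ j : Fin (m+1), M ≤ dist (u (tF j)) (bs j) := by
      intro j; rw [hbs2 j]; exact hA' j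
    refine le_csInf ⟨_, m, id, strictMono_id, rfl⟩ ?_
    rintro v ⟨l, f, hf, rfl⟩
    refine le_csInf ?_ ?_
    · -- nonempty
      set g : Fin (n+1) × Fin (l+1) → ℝ := fun p => dist (u p.1) ((bs ∘ f) p.2) with hgdef
      set δ₀ : ℝ := (⨆ p, g p) + 1 with hδ₀def
      have hgle : ∀ p, g p ≤ ⨆ p, g p := fun p => le_ciSup (Set.finite_range g).bddAbove p
      have hsup0 : 0 ≤ ⨆ p, g p := le_trans dist_nonneg (hgle ((0 : Fin (n+1)), (0 : Fin (l+1))))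
      refine ⟨δ₀, by rw [hδ₀def]; linarith, dfReach_all _ _ _ ?_⟩
      intro i j
      have h3 : g (i, j) ≤ ⨆ p, g p := hgle (i, j)
      have h4 : g (i, j) = dist (u i) ((bs ∘ f) j) := rfl
      rw [← h4, hδ₀def]; linarith
    · rintro δ ⟨hδ0, hreach⟩
      obtain ⟨τ, hτm, hτd⟩ := dfReach_extract _ _ _ hreach
      obtain ⟨i, hfix⟩ := fin_fix (fun i => tF (f (τ i)))
        (fun x y hxy => htFmono (hf.monotone (hτm hxy)))
      calc M ≤ dist (u (tF (f (τ i)))) (bs (f (τ i))) := hfar (f (τ i))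
        _ = dist (u i) (bs (f (τ i))) := by rw [hfix]
        _ = dist (u i) ((bs ∘ f) (τ i)) := rfl
        _ ≤ δ := hτd i
  obtain ⟨bs, hbs, hMbs⟩ := adversary
  have hS₁bdd : BddAbove S₁ := by
    refine ⟨M, ?_⟩
    rintro v ⟨b, hb, rfl⟩
    exact upper b hb
  apply le_antisymm
  · refine Real.sSup_le ?_ hM0
    rintro v ⟨b, hb, rfl⟩
    exact upper b hb
  · exact le_trans hMbs (le_csSup hS₁bdd ⟨bs, hbs, rfl⟩)
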